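/- arXiv:2501.13916 — 3 statements merged into one kernel-verified Lean document; each statement's English description precedes it below -/
import Mathlib

section
/- Let P, Q, R be probability measures on a measurable space with common support, and let α > 1. Then the Rényi divergence satisfies D_α(P‖Q) ≤ ((α - 1/2)/(α - 1))·D_{2α}(P‖R) + D_{2α-1}(R‖Q). -/
/-- Rényi divergence of order `a` between two probability mass functions
`P Q : α → ℝ` on a finite type: `D_a(P‖Q) = (1/(a-1)) log ∑_x P(x)^a Q(x)^(1-a)`. -/
noncomputable def renyiDiv {α : Type*} [Fintype α] (a : ℝ) (P Q : α → ℝ) : ℝ :=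
  (1 / (a - 1)) * Real.log (∑ x, P x ^ a * Q x ^ (1 - a))

/-- Weak triangle inequality for Rényi divergence (Mironov, Corollary 4):
for probability distributions `P, Q, R` with common support and `α > 1`,
`D_α(P‖Q) ≤ ((α - 1/2)/(α - 1))·D_{2α}(P‖R) + D_{2α-1}(R‖Q)`. -/
theorem renyi_weak_triangle {α : Type*} [Fintype α] (P Q R : α → ℝ)
    (hP : ∀ x, 0 ≤ P x) (hQ : ∀ x, 0 ≤ Q x) (hR : ∀ x, 0 ≤ R x)
    (hPsum : ∑ x, P x = 1) (hQsum : ∑ x, Q x = 1) (hRsum : ∑ x, R x = 1)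
    (hsupp : ∀ x, (P x ≠ 0 ↔ Q x ≠ 0) ∧ (Q x ≠ 0 ↔ R x ≠ 0))
    (a : ℝ) (ha : 1 < a) :
    renyiDiv a P Q
      ≤ ((a - 1/2) / (a - 1)) * renyiDiv (2 * a) P R
        + renyiDiv (2 * a - 1) R Q := by
  have ha0 : (0:ℝ) < a := lt_trans one_pos ha
  have ha1 : (0:ℝ) < a - 1 := sub_pos.2 ha
  have h2a1 : (0:ℝ) < 2 * a - 1 := by linarith
  have hane : a ≠ 0 := ne_of_gt ha0
  have h2ane : 2 * a ≠ 0 := by positivity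
  -- auxiliary functions for Cauchy-Schwarz
  set f : α → ℝ := fun x => P x ^ a * R x ^ ((1 - 2*a)/2) with hfdef
  set g : α → ℝ := fun x => R x ^ ((2*a - 1)/2) * Q x ^ (1 - a) with hgdef
  have hPR : ∀ x, P x ≠ 0 ↔ R x ≠ 0 := fun x => (hsupp x).1.trans (hsupp x).2
  have hfg : ∀ x, f x * g x = P x ^ a * Q x ^ (1 - a) := by
    intro x
    by_cases hRx : R x = 0
    · have hPx : P x = 0 := by
        by_contra h; exact ((hPR x).1 h) hRx
      simp [hfdef, hPx, Real.zero_rpow hane]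
    · have hRpos : 0 < R x := (hR x).lt_of_ne' hRx
      have key : R x ^ ((1 - 2*a)/2) * R x ^ ((2*a - 1)/2) = 1 := by
        rw [← Real.rpow_add hRpos, show (1 - 2*a)/2 + (2*a - 1)/2 = 0 by ring,
          Real.rpow_zero]
      calc f x * g x
          = P x ^ a * Q x ^ (1 - a) * (R x ^ ((1 - 2*a)/2) * R x ^ ((2*a - 1)/2)) := by
            simp only [hfdef, hgdef]; ring
        _ = P x ^ a * Q x ^ (1 - a) := by rw [key, mul_one]
  have hf2 : ∀ x, f x ^ 2 = P x ^ (2*a) * R x ^ (1 - 2*a) := by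
    intro x
    by_cases hRx : R x = 0
    · have hPx : P x = 0 := by
        by_contra h; exact ((hPR x).1 h) hRx
      simp [hfdef, hPx, Real.zero_rpow hane, Real.zero_rpow h2ane]
    · have hRpos : 0 < R x := (hR x).lt_of_ne' hRx
      have hPpos : 0 < P x := (hP x).lt_of_ne' ((hPR x).2 hRx)
      have h1 : P x ^ a * P x ^ a = P x ^ (2*a) := by
        rw [← Real.rpow_add hPpos]; ring_nf
      have h2 : R x ^ ((1 - 2*a)/2) * R x ^ ((1 - 2*a)/2) = R x ^ (1 - 2*a) := by
        rw [← Real.rpow_add hRpos]; ring_nf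
      calc f x ^ 2 = (P x ^ a * P x ^ a) * (R x ^ ((1 - 2*a)/2) * R x ^ ((1 - 2*a)/2)) := by
            simp only [hfdef]; ring
        _ = P x ^ (2*a) * R x ^ (1 - 2*a) := by rw [h1, h2]
  have hg2 : ∀ x, g x ^ 2 = R x ^ (2*a - 1) * Q x ^ (1 - (2*a - 1)) := by
    intro x
    by_cases hQx : Q x = 0
    · have hRx : R x = 0 := by
        by_contra h; exact ((hsupp x).2.2 h) hQx
      have h1a : (1:ℝ) - a ≠ 0 := by intro h; linarith [sub_eq_zero.mp h]
      simp [hgdef, hQx, hRx, Real.zero_rpow (ne_of_gt h2a1), Real.zero_rpow h1a]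
    · have hQpos : 0 < Q x := (hQ x).lt_of_ne' hQx
      have hRpos : 0 < R x := (hR x).lt_of_ne' ((hsupp x).2.1 hQx)
      have h1 : R x ^ ((2*a - 1)/2) * R x ^ ((2*a - 1)/2) = R x ^ (2*a - 1) := by
        rw [← Real.rpow_add hRpos]; ring_nf
      have h2 : Q x ^ (1 - a) * Q x ^ (1 - a) = Q x ^ (1 - (2*a - 1)) := by
        rw [← Real.rpow_add hQpos]; ring_nf
      calc g x ^ 2 = (R x ^ ((2*a - 1)/2) * R x ^ ((2*a - 1)/2)) *
            (Q x ^ (1 - a) * Q x ^ (1 - a)) := by simp only [hgdef]; ring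
        _ = R x ^ (2*a - 1) * Q x ^ (1 - (2*a - 1)) := by rw [h1, h2]
  -- the three sums
  set T := ∑ x, P x ^ a * Q x ^ (1 - a) with hTdef
  set S1 := ∑ x, P x ^ (2*a) * R x ^ (1 - 2*a) with hS1def
  set S2 := ∑ x, R x ^ (2*a - 1) * Q x ^ (1 - (2*a - 1)) with hS2def
  -- an index where everything is positive
  obtain ⟨x0, hx0⟩ : ∃ x, P x ≠ 0 := by
    by_contra h
    push_neg at h
    simp [h] at hPsum
  have hQx0 : 0 < Q x0 := (hQ x0).lt_of_ne' ((hsupp x0).1.1 hx0)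
  have hRx0 : 0 < R x0 := (hR x0).lt_of_ne' ((hPR x0).1 hx0)
  have hPx0 : 0 < P x0 := (hP x0).lt_of_ne' hx0
  have hTpos : 0 < T :=
    Finset.sum_pos' (fun x _ => mul_nonneg (Real.rpow_nonneg (hP x) _)
        (Real.rpow_nonneg (hQ x) _)) ⟨x0, Finset.mem_univ _,
      mul_pos (Real.rpow_pos_of_pos hPx0 _) (Real.rpow_pos_of_pos hQx0 _)⟩
  have hS1pos : 0 < S1 :=
    Finset.sum_pos' (fun x _ => mul_nonneg (Real.rpow_nonneg (hP x) _)
        (Real.rpow_nonneg (hR x) _)) ⟨x0, Finset.mem_univ _,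
      mul_pos (Real.rpow_pos_of_pos hPx0 _) (Real.rpow_pos_of_pos hRx0 _)⟩
  have hS2pos : 0 < S2 :=
    Finset.sum_pos' (fun x _ => mul_nonneg (Real.rpow_nonneg (hR x) _)
        (Real.rpow_nonneg (hQ x) _)) ⟨x0, Finset.mem_univ _,
      mul_pos (Real.rpow_pos_of_pos hRx0 _) (Real.rpow_pos_of_pos hQx0 _)⟩
  -- Cauchy-Schwarz
  have hCS : T ^ 2 ≤ S1 * S2 := by
    have := Finset.sum_mul_sq_le_sq_mul_sq Finset.univ f g
    calc T ^ 2 = (∑ x, f x * g x) ^ 2 := by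
          rw [hTdef]; congr 1; exact (Finset.sum_congr rfl fun x _ => hfg x).symm
      _ ≤ (∑ x, f x ^ 2) * (∑ x, g x ^ 2) := this
      _ = S1 * S2 := by
          rw [hS1def, hS2def,
            Finset.sum_congr rfl (fun x _ => hf2 x),
            Finset.sum_congr rfl (fun x _ => hg2 x)]
  have hlog : 2 * Real.log T ≤ Real.log S1 + Real.log S2 := by
    have := Real.log_le_log (by positivity) hCS
    rwa [Real.log_pow, Real.log_mul (ne_of_gt hS1pos) (ne_of_gt hS2pos),
      Nat.cast_ofNat] at this
  -- conclude
  unfold renyiDiv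
  rw [← hTdef, ← hS1def]
  have hS2eq : (∑ x, R x ^ (2*a - 1) * Q x ^ (1 - (2*a - 1))) = S2 := rfl
  rw [hS2eq]
  have key : (1 / (a - 1)) * Real.log T ≤
      (1 / (2 * (a - 1))) * (Real.log S1 + Real.log S2) := by
    have h := mul_le_mul_of_nonneg_left hlog (le_of_lt (by positivity :
      (0:ℝ) < 1 / (2 * (a - 1))))
    calc (1 / (a - 1)) * Real.log T = (1 / (2 * (a - 1))) * (2 * Real.log T) := by
          field_simp
      _ ≤ _ := h
  refine key.trans (le_of_eq ?_)
  have h1 : a - 1 ≠ 0 := ne_of_gt ha1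
  have h2 : 2 * a - 1 ≠ 0 := ne_of_gt h2a1
  have h3 : 2 * a - 1 - 1 ≠ 0 := by intro h; apply h1; linarith
  field_simp
  ring
end

section
/- Let k ≥ 2 and suppose c > 0 is such that for each λ > 1, D_λ(P_k‖Q) ≤ c·S_k(λ), where S_k(λ) = (2^{k+1} - 2^{k-1} - 2)λ - (3·2^{k-1} - 3k) + (2^{k-1} - 1)/(2^{k-2}(λ-1)), and D_λ(P'‖P_k) ≤ c·λ for all λ > 1. Then for all α > 1, D_α(P'‖Q) ≤ c·S_{k+1}(α), where S_{k+1}(α) = (2^{k+2} - 2^k - 2)α - (3·2^k - 3(k+1)) + (2^k - 1)/(2^{k-1}(α-1)). -/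
/-- The amplification factor
`S_k(λ) = (2^{k+1} - 2^{k-1} - 2)λ - (3·2^{k-1} - 3k) + (2^{k-1} - 1)/(2^{k-2}(λ-1))`. -/
noncomputable def Sfac (k : ℕ) (l : ℝ) : ℝ :=
  ((2 : ℝ) ^ (k + 1) - 2 ^ (k - 1) - 2) * l - (3 * 2 ^ (k - 1) - 3 * k)
    + ((2 : ℝ) ^ (k - 1) - 1) / (2 ^ (k - 2) * (l - 1))

/-- Inductive step of the group-privacy analysis: if `D_λ(P_k‖Q) ≤ c·S_k(λ)`
and `D_λ(P'‖P_k) ≤ c·λ` for all `λ > 1`, then `D_α(P'‖Q) ≤ c·S_{k+1}(α)` for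
all `α > 1`. -/
theorem renyi_group_privacy_step {α : Type*} [Fintype α] (P' Pk Q : α → ℝ)
    (hP' : ∀ x, 0 ≤ P' x) (hPk : ∀ x, 0 ≤ Pk x) (hQ : ∀ x, 0 ≤ Q x)
    (hP'sum : ∑ x, P' x = 1) (hPksum : ∑ x, Pk x = 1) (hQsum : ∑ x, Q x = 1)
    (hsupp : ∀ x, (P' x ≠ 0 ↔ Pk x ≠ 0) ∧ (Pk x ≠ 0 ↔ Q x ≠ 0))
    (k : ℕ) (hk : 2 ≤ k) (c : ℝ) (hc : 0 < c)
    (hPkQ : ∀ l : ℝ, 1 < l → renyiDiv l Pk Q ≤ c * Sfac k l)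
    (hP'Pk : ∀ l : ℝ, 1 < l → renyiDiv l P' Pk ≤ c * l) :
    ∀ a : ℝ, 1 < a → renyiDiv a P' Q ≤ c * Sfac (k + 1) a := by
  intro a ha
  have ha1 : (0:ℝ) < a - 1 := by linarith
  have h2a : (1:ℝ) < 2 * a := by linarith
  have h2a1 : (1:ℝ) < 2 * a - 1 := by linarith
  -- existence of a point in the common support
  obtain ⟨x0, hx0⟩ : ∃ x, P' x ≠ 0 := by
    by_contra h
    push_neg at h
    simp [h] at hP'sum
  have hP'0 : 0 < P' x0 := lt_of_le_of_ne (hP' x0) (Ne.symm hx0)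
  have hPk0 : 0 < Pk x0 := lt_of_le_of_ne (hPk x0) (Ne.symm ((hsupp x0).1.mp hx0))
  have hQ0 : 0 < Q x0 := lt_of_le_of_ne (hQ x0)
    (Ne.symm ((hsupp x0).2.mp ((hsupp x0).1.mp hx0)))
  set T := ∑ x, P' x ^ a * Q x ^ (1 - a) with hT_def
  set A := ∑ x, P' x ^ (2*a) * Pk x ^ (1 - 2*a) with hA_def
  set B := ∑ x, Pk x ^ (2*a - 1) * Q x ^ (1 - (2*a - 1)) with hB_def
  have hpos : ∀ (R S : α → ℝ), (∀ x, 0 ≤ R x) → (∀ x, 0 ≤ S x) → 0 < R x0 → 0 < S x0 →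
      ∀ (p q : ℝ), 0 < ∑ x, R x ^ p * S x ^ q := by
    intro R S hR hS hR0 hS0 p q
    refine Finset.sum_pos' (fun i _ => mul_nonneg (Real.rpow_nonneg (hR i) _)
      (Real.rpow_nonneg (hS i) _)) ⟨x0, Finset.mem_univ _, ?_⟩
    exact mul_pos (Real.rpow_pos_of_pos hR0 _) (Real.rpow_pos_of_pos hS0 _)
  have hTpos : 0 < T := hpos P' Q hP' hQ hP'0 hQ0 _ _
  have hApos : 0 < A := hpos P' Pk hP' hPk hP'0 hPk0 _ _
  have hBpos : 0 < B := hpos Pk Q hPk hQ hPk0 hQ0 _ _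
  -- Cauchy-Schwarz
  set f : α → ℝ := fun x => P' x ^ a * Pk x ^ ((1 - 2*a)/2) with hf_def
  set g : α → ℝ := fun x => Pk x ^ ((2*a - 1)/2) * Q x ^ (1 - a) with hg_def
  have hane : a ≠ 0 := by linarith
  have hfg : ∀ x, P' x ^ a * Q x ^ (1 - a) = f x * g x := by
    intro x
    by_cases hx : Pk x = 0
    · have hx' : P' x = 0 := by
        by_contra h; exact (hsupp x).1.mp h hx
      rw [hx', Real.zero_rpow hane]
      simp only [hf_def, hx', Real.zero_rpow hane, zero_mul]
    · have hxp : 0 < Pk x := lt_of_le_of_ne (hPk x) (Ne.symm hx)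
      simp only [hf_def, hg_def]
      rw [show P' x ^ a * Pk x ^ ((1 - 2*a)/2) * (Pk x ^ ((2*a - 1)/2) * Q x ^ (1 - a))
          = P' x ^ a * (Pk x ^ ((1 - 2*a)/2) * Pk x ^ ((2*a - 1)/2)) * Q x ^ (1 - a) by ring,
        ← Real.rpow_add hxp, show (1 - 2*a)/2 + (2*a - 1)/2 = 0 by ring, Real.rpow_zero,
        mul_one]
  have hf2 : ∀ x, f x ^ 2 = P' x ^ (2*a) * Pk x ^ (1 - 2*a) := by
    intro x
    simp only [hf_def]
    rw [mul_pow, ← Real.rpow_natCast (P' x ^ a) 2, ← Real.rpow_natCast (Pk x ^ _) 2,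
      ← Real.rpow_mul (hP' x), ← Real.rpow_mul (hPk x)]
    push_cast
    rw [show a * 2 = 2 * a by ring, show (1 - 2*a)/2 * 2 = 1 - 2*a by ring]
  have hg2 : ∀ x, g x ^ 2 = Pk x ^ (2*a - 1) * Q x ^ (1 - (2*a - 1)) := by
    intro x
    simp only [hg_def]
    rw [mul_pow, ← Real.rpow_natCast (Pk x ^ _) 2, ← Real.rpow_natCast (Q x ^ _) 2,
      ← Real.rpow_mul (hPk x), ← Real.rpow_mul (hQ x)]
    push_cast
    rw [show (2*a - 1)/2 * 2 = 2*a - 1 by ring, show (1 - a) * 2 = 1 - (2*a - 1) by ring]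
  have hCS : T ^ 2 ≤ A * B := by
    calc T ^ 2 = (∑ x, f x * g x) ^ 2 := by
          rw [hT_def]; congr 1; exact Finset.sum_congr rfl fun x _ => hfg x
      _ ≤ (∑ x, f x ^ 2) * ∑ x, g x ^ 2 := Finset.sum_mul_sq_le_sq_mul_sq _ _ _
      _ = A * B := by
          rw [hA_def, hB_def]
          simp only [hf2, hg2]
  -- take logs
  have hlog : Real.log T ≤ (1/2) * Real.log A + (1/2) * Real.log B := by
    have h1 : T ≤ Real.sqrt (A * B) :=
      Real.le_sqrt_of_sq_le hCS
    calc Real.log T ≤ Real.log (Real.sqrt (A * B)) :=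
          Real.log_le_log hTpos h1
      _ = (1/2) * Real.log A + (1/2) * Real.log B := by
          rw [Real.log_sqrt (by positivity), Real.log_mul (ne_of_gt hApos) (ne_of_gt hBpos)]
          ring
  -- relate to Rényi divergences
  have hDA : Real.log A = (2*a - 1) * renyiDiv (2*a) P' Pk := by
    rw [renyiDiv, ← hA_def]
    field_simp
  have h22 : (2:ℝ)*a - 2 ≠ 0 := by intro h; linarith [h]
  have hDB : Real.log B = (2*a - 2) * renyiDiv (2*a - 1) Pk Q := by
    rw [renyiDiv, ← hB_def, show (2*a - 1) - 1 = 2*a - 2 by ring]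
    field_simp
  have key : renyiDiv a P' Q ≤
      (1/(a-1)) * ((1/2) * ((2*a-1) * (c * (2*a))) + (1/2) * ((2*a-2) * (c * Sfac k (2*a-1)))) := by
    rw [renyiDiv, ← hT_def]
    have step1 : (1/(a-1)) * Real.log T
        ≤ (1/(a-1)) * ((1/2) * Real.log A + (1/2) * Real.log B) := by
      apply mul_le_mul_of_nonneg_left hlog (by positivity)
    refine step1.trans ?_
    apply mul_le_mul_of_nonneg_left _ (by positivity)
    rw [hDA, hDB]
    have h1 := hP'Pk (2*a) h2a
    have h2 := hPkQ (2*a - 1) h2a1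
    have c1 : (0:ℝ) ≤ 2*a - 1 := by linarith
    have c2 : (0:ℝ) ≤ 2*a - 2 := by linarith
    gcongr
  refine key.trans (le_of_eq ?_)
  -- final algebraic identity
  obtain ⟨m, rfl⟩ : ∃ m, k = m + 2 := ⟨k - 2, by omega⟩
  have e1 : m + 2 + 1 = m + 3 := rfl
  have e2 : m + 2 - 1 = m + 1 := rfl
  have e3 : m + 2 - 2 = m := rfl
  have e4 : m + 3 - 1 = m + 2 := rfl
  have e5 : m + 3 - 2 = m + 1 := rfl
  simp only [Sfac, e1, e2, e3, e4, e5]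
  have hne : (a:ℝ) - 1 ≠ 0 := ne_of_gt ha1
  have hne2 : (2:ℝ) ^ m ≠ 0 := by positivity
  have hne3 : (2:ℝ) * a - 1 - 1 ≠ 0 := by intro h; apply hne; linarith [h]
  push_cast
  rw [show (2:ℝ)*a - 1 - 1 = 2*(a-1) by ring]
  field_simp
  ring
end

section
/- For every integer M ≥ 2 and every real α > 1, S_M(α) := (2^{M+1} - 2^{M-1} - 2)·α - (3·2^{M-1} - 3M) + (2^{M-1} - 1)/(2^{M-2}·(α-1)) satisfies S_M(α) > M·α. -/
/-!
Substituting `t = α - 1`, the linear part of `S_M(α) - Mα` has constant term `2(M - 1)` and slope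
`3·2^{M-1} - M - 2 ≥ 0`, while the remaining fraction is nonnegative; so the difference is at least
`2(M - 1) > 0`.
-/

/-- The factor `S_M(α)` of the per-sample privacy analysis. -/
noncomputable def groupPrivacyFactor (M : ℕ) (α : ℝ) : ℝ :=
  ((2 : ℝ) ^ (M + 1) - 2 ^ (M - 1) - 2) * α - (3 * 2 ^ (M - 1) - 3 * M)
    + ((2 : ℝ) ^ (M - 1) - 1) / (2 ^ (M - 2) * (α - 1))

lemma groupPrivacyFactor_sub_mul_self {M : ℕ} (hM : 1 ≤ M) (α : ℝ) :
    groupPrivacyFactor M α - M * α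
      = (3 * 2 ^ (M - 1) - M - 2) * (α - 1) + 2 * (M - 1)
        + ((2 : ℝ) ^ (M - 1) - 1) / (2 ^ (M - 2) * (α - 1)) := by
  obtain ⟨n, rfl⟩ := Nat.exists_eq_add_of_le' hM
  simp only [groupPrivacyFactor, Nat.add_sub_cancel, pow_succ, Nat.cast_add, Nat.cast_one]
  ring

lemma add_two_le_three_mul_two_pow_pred {M : ℕ} (hM : 1 ≤ M) :
    (M : ℝ) + 2 ≤ 3 * 2 ^ (M - 1) := by
  obtain ⟨n, rfl⟩ := Nat.exists_eq_add_of_le' hM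
  have hn : (n : ℝ) + 1 ≤ 2 ^ n := by exact_mod_cast Nat.lt_two_pow_self
  have h1 : (1 : ℝ) ≤ 2 ^ n := one_le_pow₀ one_le_two
  push_cast
  linarith

/-- The group-privacy amplification factor
`S_M(α) = (2^{M+1} - 2^{M-1} - 2)α - (3·2^{M-1} - 3M) + (2^{M-1} - 1)/(2^{M-2}(α-1))`
exceeds `M·α` for every integer `M ≥ 2` and real `α > 1`. -/
theorem S_factor_gt (M : ℕ) (hM : 2 ≤ M) (α : ℝ) (hα : 1 < α) :
    ((2 : ℝ) ^ (M + 1) - 2 ^ (M - 1) - 2) * α - (3 * 2 ^ (M - 1) - 3 * M)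
        + ((2 : ℝ) ^ (M - 1) - 1) / (2 ^ (M - 2) * (α - 1))
      > (M : ℝ) * α := by
  change groupPrivacyFactor M α > M * α
  rw [gt_iff_lt, ← sub_pos, groupPrivacyFactor_sub_mul_self (by omega)]
  have hslope : 0 ≤ (3 * 2 ^ (M - 1) - M - 2) * (α - 1) :=
    mul_nonneg (by linarith [add_two_le_three_mul_two_pow_pred (M := M) (by omega)])
      (by linarith)
  have hfrac : 0 ≤ ((2 : ℝ) ^ (M - 1) - 1) / (2 ^ (M - 2) * (α - 1)) :=
    div_nonneg (sub_nonneg.2 (one_le_pow₀ one_le_two)) (by positivity [sub_pos.2 hα])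
  have hconst : (0 : ℝ) < 2 * (M - 1) := by
    have : (2 : ℝ) ≤ M := by exact_mod_cast hM
    linarith
  linarith
end
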